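/- arXiv:1810.05957 — 3 statements merged into one kernel-verified Lean document; each statement's English description precedes it below -/
import Mathlib

section
/- Let Y be a (1−2ε)-uniform approximate transportation matrix from p to q with residuals p' = (I − diag(Yᵀ𝟙))p and q' = q − Yp, and suppose α := ⟨𝟙, q'⟩ > 0. Let Z ∈ ℝ^{k×ℓ} have every column equal to q'/α, and set Z' = Z(I − diag(Yᵀ𝟙)). Then Y + Z' is a transportation matrix from p to q: (Y+Z')p = q and (Y+Z')ᵀ𝟙 = 𝟙. -/
/-!
The residuals `r = q - Y p` and `c = 𝟙 - Yᵀ𝟙` of `Y` on the two marginals carry the same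
mass `α`: both equal `1 - ⟨𝟙, Y p⟩` because `p` and `q` are probability vectors. Hence the
rank-one correction `Z' = α⁻¹ r cᵀ` sends `p` to `(⟨c, p⟩ / α) r = r` and has column sums
`(⟨𝟙, r⟩ / α) c = c`, so it fills exactly both gaps; it is nonnegative when `Y` undershoots
both marginals.
-/

open Matrix

namespace Matrix

variable {ι κ K : Type*} [Fintype κ]

theorem one_vecMul_apply [NonAssocSemiring K] (M : Matrix κ ι K) (j : ι) :
    (1 ᵥ* M) j = ∑ i, M i j := by
  simp only [vecMul, dotProduct, Pi.one_apply, one_mul]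

variable [Fintype ι]

section Field

variable [Field K] (Y : Matrix κ ι K) (p : ι → K) (q : κ → K)

def obliviousRepair : Matrix κ ι K :=
  Y + vecMulVec ((1 ⬝ᵥ (q - Y *ᵥ p))⁻¹ • (q - Y *ᵥ p)) (1 - 1 ᵥ* Y)

theorem obliviousRepair_apply (i : κ) (j : ι) :
    obliviousRepair Y p q i j = Y i j +
      (q i - ∑ j', Y i j' * p j') / (∑ i', (q i' - ∑ j', Y i' j' * p j')) *
        (1 - ∑ i', Y i' j) := by
  simp only [obliviousRepair, add_apply, vecMulVec_apply, Pi.smul_apply, Pi.sub_apply,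
    Pi.one_apply, smul_eq_mul, one_vecMul_apply, mulVec, dotProduct, one_mul]
  ring

theorem one_sub_one_vecMul_dotProduct (h : ∑ j, p j = ∑ i, q i) :
    (1 - 1 ᵥ* Y) ⬝ᵥ p = 1 ⬝ᵥ (q - Y *ᵥ p) := by
  rw [sub_dotProduct, dotProduct_sub, dotProduct_mulVec, one_dotProduct, one_dotProduct, h]

variable {Y p q}

theorem obliviousRepair_mulVec (h : ∑ j, p j = ∑ i, q i) (hα : 1 ⬝ᵥ (q - Y *ᵥ p) ≠ 0) :
    obliviousRepair Y p q *ᵥ p = q := by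
  rw [obliviousRepair, add_mulVec, vecMulVec_mulVec, one_sub_one_vecMul_dotProduct Y p q h,
    op_smul_eq_smul, smul_smul, mul_inv_cancel₀ hα, one_smul, add_sub_cancel]

theorem one_vecMul_obliviousRepair (hα : 1 ⬝ᵥ (q - Y *ᵥ p) ≠ 0) :
    1 ᵥ* obliviousRepair Y p q = 1 := by
  rw [obliviousRepair, vecMul_add, vecMul_vecMulVec, dotProduct_smul, smul_eq_mul,
    inv_mul_cancel₀ hα, one_smul, add_sub_cancel]

end Field

theorem obliviousRepair_nonneg [Field K] [LinearOrder K] [IsStrictOrderedRing K]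
    {Y : Matrix κ ι K} {p : ι → K} {q : κ → K} (hY : ∀ i j, 0 ≤ Y i j)
    (hYp : Y *ᵥ p ≤ q) (hYt : 1 ᵥ* Y ≤ 1) (i : κ) (j : ι) :
    0 ≤ obliviousRepair Y p q i j := by
  have hr : 0 ≤ q - Y *ᵥ p := sub_nonneg.2 hYp
  have hα : 0 ≤ 1 ⬝ᵥ (q - Y *ᵥ p) := by
    rw [one_dotProduct]
    exact Finset.sum_nonneg fun i _ => hr i
  exact add_nonneg (hY i j)
    (mul_nonneg (smul_nonneg (inv_nonneg.2 hα) (hr i)) (sub_nonneg.2 (hYt j)))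

end Matrix

theorem repair_uniform_transport_general (k ℓ : ℕ)
    (p : Fin ℓ → ℝ) (q : Fin k → ℝ)
    (hp1 : ∑ j, p j = 1)
    (hq1 : ∑ i, q i = 1)
    (Y : Matrix (Fin k) (Fin ℓ) ℝ)
    (hYpos : ∀ i j, 0 ≤ Y i j)
    (hYp_hi : ∀ i, ∑ j, Y i j * p j ≤ q i)
    (hYt_hi : ∀ j, ∑ i, Y i j ≤ 1)
    (α : ℝ) (hα : α = ∑ i, (q i - ∑ j, Y i j * p j)) (hαpos : 0 < α)
    (Z Z' : Matrix (Fin k) (Fin ℓ) ℝ)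
    (hZ : ∀ i j, Z i j = (q i - ∑ j', Y i j' * p j') / α)
    (hZ' : ∀ i j, Z' i j = Z i j * (1 - ∑ i', Y i' j)) :
    (∀ i j, 0 ≤ Y i j + Z' i j) ∧
    (∀ i, ∑ j, (Y i j + Z' i j) * p j = q i) ∧
    (∀ j, ∑ i, (Y i j + Z' i j) = 1) := by
  have hY_add_Z' : ∀ i j, Y i j + Z' i j = obliviousRepair Y p q i j := fun i j => by
    rw [obliviousRepair_apply, hZ', hZ, hα]
  have hα_ne : 1 ⬝ᵥ (q - Y *ᵥ p) ≠ 0 := by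
    rw [one_dotProduct]
    exact (hα ▸ hαpos).ne'
  have hYt : 1 ᵥ* Y ≤ 1 := fun j => (one_vecMul_apply Y j).trans_le (hYt_hi j)
  simp only [hY_add_Z']
  refine ⟨obliviousRepair_nonneg hYpos hYp_hi hYt, fun i => ?_, fun j => ?_⟩
  · exact congrFun (obliviousRepair_mulVec (hp1.trans hq1.symm) hα_ne) i
  · rw [← one_vecMul_apply, one_vecMul_obliviousRepair hα_ne, Pi.one_apply]

/-- Repairing a `(1−2ε)`-uniform approximate transportation matrix `Y` by the
oblivious scheme on the residuals yields an exact transportation matrix: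
with `q' = q − Yp`, `α = ⟨𝟙,q'⟩ > 0`, `Z` the matrix with every column `q'/α`,
and `Z' = Z(I − diag(Yᵀ𝟙))`, the matrix `Y + Z'` satisfies `(Y+Z')p = q` and
`(Y+Z')ᵀ𝟙 = 𝟙` and is nonnegative. -/
theorem repair_uniform_transport (k ℓ : ℕ)
    (p : Fin ℓ → ℝ) (q : Fin k → ℝ)
    (hp : ∀ j, 0 ≤ p j) (hp1 : ∑ j, p j = 1)
    (hq : ∀ i, 0 ≤ q i) (hq1 : ∑ i, q i = 1)
    (ε : ℝ) (hε0 : 0 < ε) (hε1 : ε < 1 / 2)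
    (Y : Matrix (Fin k) (Fin ℓ) ℝ)
    (hYpos : ∀ i j, 0 ≤ Y i j)
    (hYp_lo : ∀ i, (1 - 2 * ε) * q i ≤ ∑ j, Y i j * p j)
    (hYp_hi : ∀ i, ∑ j, Y i j * p j ≤ q i)
    (hYt_lo : ∀ j, 1 - 2 * ε ≤ ∑ i, Y i j)
    (hYt_hi : ∀ j, ∑ i, Y i j ≤ 1)
    (α : ℝ) (hα : α = ∑ i, (q i - ∑ j, Y i j * p j)) (hαpos : 0 < α)
    (Z Z' : Matrix (Fin k) (Fin ℓ) ℝ)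
    (hZ : ∀ i j, Z i j = (q i - ∑ j', Y i j' * p j') / α)
    (hZ' : ∀ i j, Z' i j = Z i j * (1 - ∑ i', Y i' j)) :
    (∀ i j, 0 ≤ Y i j + Z' i j) ∧
    (∀ i, ∑ j, (Y i j + Z' i j) * p j = q i) ∧
    (∀ j, ∑ i, (Y i j + Z' i j) = 1) :=
  repair_uniform_transport_general k ℓ p q hp1 hq1 Y hYpos hYp_hi hYt_hi α hα hαpos Z Z' hZ hZ'
end

section
/- Let X be a (1−ε)-transportation matrix from p to q with residual mass α = ⟨𝟙, q − Xp⟩ > 0. With p' = (I − diag(Xᵀ𝟙))p, q' = q − Xp, Y the matrix with every column q'/α, and Y' = Y(I − diag(Xᵀ𝟙)), the matrix X + Y' is a transportation matrix from p to q, and the cost of Y' satisfies Σ_{i,j} C_{ij} Y'_{ij} p_j = (1/α)⟨C q', p'⟩ ≤ α‖C‖_∞ ≤ ε‖C‖_∞. -/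
/-!
Both residuals `q' = q - Xp` and `p' = (1 - Xᵀ𝟙) ⊙ p` carry the unmatched mass
`α = 1 - ⟨𝟙, Xp⟩ ≤ ε`. The correction is the rank-one plan `Y'ᵢⱼ pⱼ = q'ᵢ p'ⱼ / α`,
which transports `p'` exactly onto `q'`, so `X + Y'` has the right marginals; its cost
is at most `‖C‖_∞ ⟨𝟙, q'⟩⟨𝟙, p'⟩ / α = α ‖C‖_∞`.
-/

open Finset

section

variable {ι κ : Type*} [Fintype ι] [Fintype κ]

theorem le_univ_sup'_univ_sup' [Nonempty ι] [Nonempty κ] (C : ι → κ → ℝ) (i : ι) (j : κ) :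
    C i j ≤ univ.sup' univ_nonempty (fun i => univ.sup' univ_nonempty (fun j => C i j)) :=
  le_sup'_of_le _ (mem_univ i) (le_sup' _ (mem_univ j))

theorem sum_sum_mul_mul_le_of_le {C : ι → κ → ℝ} {M : ℝ} (hC : ∀ i j, C i j ≤ M)
    {a : ι → ℝ} {b : κ → ℝ} (ha : ∀ i, 0 ≤ a i) (hb : ∀ j, 0 ≤ b j) :
    ∑ i, ∑ j, C i j * a i * b j ≤ M * (∑ i, a i) * ∑ j, b j := by
  calc ∑ i, ∑ j, C i j * a i * b j ≤ ∑ i, ∑ j, M * a i * b j := by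
        gcongr with i _ j _
        · exact hb j
        · exact ha i
        · exact hC i j
    _ = M * (∑ i, a i) * ∑ j, b j := by rw [sum_comm]; simp only [mul_sum, sum_mul]

theorem sum_sub_sum_mul_of_sum_eq_one (X : ι → κ → ℝ) (p : κ → ℝ) {q : ι → ℝ}
    (hq : ∑ i, q i = 1) :
    ∑ i, (q i - ∑ j, X i j * p j) = 1 - ∑ i, ∑ j, X i j * p j := by
  rw [sum_sub_distrib, hq]

theorem sum_one_sub_sum_mul_of_sum_eq_one (X : ι → κ → ℝ) {p : κ → ℝ} (hp : ∑ j, p j = 1) :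
    ∑ j, (1 - ∑ i, X i j) * p j = 1 - ∑ i, ∑ j, X i j * p j := by
  simp only [sub_mul, one_mul, sum_mul]
  rw [sum_sub_distrib, hp, sum_comm]

end

theorem repair_packing_transport_general (k ℓ : ℕ) [NeZero k] [NeZero ℓ]
    (p : Fin ℓ → ℝ) (q : Fin k → ℝ) (C : Matrix (Fin k) (Fin ℓ) ℝ)
    (hp : ∀ j, 0 ≤ p j) (hp1 : ∑ j, p j = 1)
    (hq1 : ∑ i, q i = 1)
    (hC : ∀ i j, 0 ≤ C i j)
    (ε : ℝ)
    (X : Matrix (Fin k) (Fin ℓ) ℝ)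
    (hXpos : ∀ i j, 0 ≤ X i j)
    (hXp : ∀ i, ∑ j, X i j * p j ≤ q i)
    (hXt : ∀ j, ∑ i, X i j ≤ 1)
    (hmass : 1 - ε ≤ ∑ i, ∑ j, X i j * p j)
    (p' : Fin ℓ → ℝ) (hp' : ∀ j, p' j = (1 - ∑ i, X i j) * p j)
    (q' : Fin k → ℝ) (hq' : ∀ i, q' i = q i - ∑ j, X i j * p j)
    (α : ℝ) (hα : α = ∑ i, q' i) (hαpos : 0 < α)
    (Y Y' : Matrix (Fin k) (Fin ℓ) ℝ)
    (hY : ∀ i j, Y i j = q' i / α)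
    (hY' : ∀ i j, Y' i j = Y i j * (1 - ∑ i', X i' j)) :
    (∀ i j, 0 ≤ X i j + Y' i j) ∧
    (∀ i, ∑ j, (X i j + Y' i j) * p j = q i) ∧
    (∀ j, ∑ i, (X i j + Y' i j) = 1) ∧
    (∑ i, ∑ j, C i j * Y' i j * p j = (1 / α) * ∑ i, ∑ j, C i j * q' i * p' j) ∧
    (∑ i, ∑ j, C i j * Y' i j * p j
      ≤ α * Finset.univ.sup' Finset.univ_nonempty
          (fun i : Fin k => Finset.univ.sup' Finset.univ_nonempty (fun j => C i j))) ∧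
    (α * Finset.univ.sup' Finset.univ_nonempty
          (fun i : Fin k => Finset.univ.sup' Finset.univ_nonempty (fun j => C i j))
      ≤ ε * Finset.univ.sup' Finset.univ_nonempty
          (fun i : Fin k => Finset.univ.sup' Finset.univ_nonempty (fun j => C i j))) := by
  have hq'_nonneg (i) : 0 ≤ q' i := by rw [hq' i]; linarith [hXp i]
  have hdeficit_nonneg (j) : 0 ≤ 1 - ∑ i, X i j := by linarith [hXt j]
  have hp'_nonneg (j) : 0 ≤ p' j := by rw [hp' j]; exact mul_nonneg (hdeficit_nonneg j) (hp j)
  have hα_eq : α = 1 - ∑ i, ∑ j, X i j * p j := by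
    rw [hα, funext hq', sum_sub_sum_mul_of_sum_eq_one X p hq1]
  have hsum_p' : ∑ j, p' j = α := by rw [funext hp', sum_one_sub_sum_mul_of_sum_eq_one X hp1, hα_eq]
  have hY'p (i j) : Y' i j * p j = q' i / α * p' j := by rw [hY', hY, hp']; ring
  have hcost : ∑ i, ∑ j, C i j * Y' i j * p j = (1 / α) * ∑ i, ∑ j, C i j * q' i * p' j := by
    simp only [mul_assoc, hY'p, mul_sum]
    exact sum_congr rfl fun i _ => sum_congr rfl fun j _ => by ring
  refine ⟨fun i j => ?_, fun i => ?_, fun j => ?_, hcost, ?_, ?_⟩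
  · rw [hY', hY]
    exact add_nonneg (hXpos i j)
      (mul_nonneg (div_nonneg (hq'_nonneg i) hαpos.le) (hdeficit_nonneg j))
  · rw [sum_congr rfl fun j _ => add_mul _ _ _, sum_add_distrib, sum_congr rfl fun j _ => hY'p i j,
      ← mul_sum, hsum_p', div_mul_cancel₀ _ hαpos.ne', hq' i, add_sub_cancel]
  · simp only [hY', hY, sum_add_distrib, ← sum_mul, ← sum_div, ← hα, div_self hαpos.ne', one_mul,
      add_sub_cancel]
  · have hbound := sum_sum_mul_mul_le_of_le (le_univ_sup'_univ_sup' C) hq'_nonneg hp'_nonneg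
    rw [← hα, hsum_p'] at hbound
    rw [hcost, one_div_mul_eq_div, div_le_iff₀ hαpos]
    linarith
  · exact mul_le_mul_of_nonneg_right (by linarith) ((hC 0 0).trans (le_univ_sup'_univ_sup' C 0 0))

/-- Repairing a `(1−ε)`-transportation matrix `X` with the oblivious scheme on
the residuals yields an exact transportation matrix `X + Y'`, and the added
cost satisfies `∑ᵢⱼ Cᵢⱼ Y'ᵢⱼ pⱼ = (1/α)⟨Cq',p'⟩ ≤ α‖C‖_∞ ≤ ε‖C‖_∞`. -/
theorem repair_packing_transport (k ℓ : ℕ) [NeZero k] [NeZero ℓ]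
    (p : Fin ℓ → ℝ) (q : Fin k → ℝ) (C : Matrix (Fin k) (Fin ℓ) ℝ)
    (hp : ∀ j, 0 ≤ p j) (hp1 : ∑ j, p j = 1)
    (hq : ∀ i, 0 ≤ q i) (hq1 : ∑ i, q i = 1)
    (hC : ∀ i j, 0 ≤ C i j)
    (ε : ℝ) (hε0 : 0 < ε) (hε1 : ε ≤ 1)
    (X : Matrix (Fin k) (Fin ℓ) ℝ)
    (hXpos : ∀ i j, 0 ≤ X i j)
    (hXp : ∀ i, ∑ j, X i j * p j ≤ q i)
    (hXt : ∀ j, ∑ i, X i j ≤ 1)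
    (hmass : 1 - ε ≤ ∑ i, ∑ j, X i j * p j)
    (p' : Fin ℓ → ℝ) (hp' : ∀ j, p' j = (1 - ∑ i, X i j) * p j)
    (q' : Fin k → ℝ) (hq' : ∀ i, q' i = q i - ∑ j, X i j * p j)
    (α : ℝ) (hα : α = ∑ i, q' i) (hαpos : 0 < α)
    (Y Y' : Matrix (Fin k) (Fin ℓ) ℝ)
    (hY : ∀ i j, Y i j = q' i / α)
    (hY' : ∀ i j, Y' i j = Y i j * (1 - ∑ i', X i' j)) :
    (∀ i j, 0 ≤ X i j + Y' i j) ∧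
    (∀ i, ∑ j, (X i j + Y' i j) * p j = q i) ∧
    (∀ j, ∑ i, (X i j + Y' i j) = 1) ∧
    (∑ i, ∑ j, C i j * Y' i j * p j = (1 / α) * ∑ i, ∑ j, C i j * q' i * p' j) ∧
    (∑ i, ∑ j, C i j * Y' i j * p j
      ≤ α * Finset.univ.sup' Finset.univ_nonempty
          (fun i : Fin k => Finset.univ.sup' Finset.univ_nonempty (fun j => C i j))) ∧
    (α * Finset.univ.sup' Finset.univ_nonempty
          (fun i : Fin k => Finset.univ.sup' Finset.univ_nonempty (fun j => C i j))
      ≤ ε * Finset.univ.sup' Finset.univ_nonempty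
          (fun i : Fin k => Finset.univ.sup' Finset.univ_nonempty (fun j => C i j))) :=
  repair_packing_transport_general k ℓ p q C hp hp1 hq1 hC ε X hXpos hXp hXt hmass p' hp' q' hq' α
    hα hαpos Y Y' hY hY'
end

section
/- Given a (1−ε)-transportation matrix X from p to q with cost at most OPT + δ/2, where ε = δ/(2‖C‖_∞), there exists a transportation matrix U from p to q with cost at most OPT + δ. -/
/-!
Let `m = 1 - ⟨𝟙, Xp⟩` be the missing mass. The row deficits `s = q - Xp` and the column
deficits `r = 𝟙 - Xᵀ𝟙`, weighted by `p`, both have total `m`, so adding the rank-one matrix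
`(s / m) rᵀ` to `X` fills every row and column exactly (if `m = 0`, any `w rᵀ` with `w` in the
simplex does). That correction moves mass `m` at unit cost at most `‖C‖_∞`, so it costs at most
`‖C‖_∞ · m ≤ ‖C‖_∞ · ε = δ/2`.
-/

open Finset Matrix

variable {ι κ : Type*} [Fintype ι] [Fintype κ]

/-- A plan `U` transports `p` (indexed by columns) onto `q` (indexed by rows); `U i j` is the
fraction of the mass `p j` sent to `i`. -/
def IsTransportPlan (p : κ → ℝ) (q : ι → ℝ) (U : Matrix ι κ ℝ) : Prop :=
  (∀ i j, 0 ≤ U i j) ∧ (∀ i, ∑ j, U i j * p j = q i) ∧ (∀ j, ∑ i, U i j = 1)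

def transportCost (C : Matrix ι κ ℝ) (p : κ → ℝ) (U : Matrix ι κ ℝ) : ℝ :=
  ∑ i, ∑ j, C i j * U i j * p j

def transportMass (p : κ → ℝ) (X : Matrix ι κ ℝ) : ℝ :=
  ∑ i, ∑ j, X i j * p j

def columnDeficit (X : Matrix ι κ ℝ) (j : κ) : ℝ :=
  1 - ∑ i, X i j

theorem exists_mem_stdSimplex_sum_smul_eq [Nonempty ι] {s : ι → ℝ} (hs : ∀ i, 0 ≤ s i) :
    ∃ w ∈ stdSimplex ℝ ι, (∑ i, s i) • w = s := by
  classical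
  by_cases hzero : ∑ i, s i = 0
  · have hs0 : s = 0 := funext fun i =>
      (sum_eq_zero_iff_of_nonneg fun i _ => hs i).1 hzero i (mem_univ i)
    exact ⟨Pi.single (Classical.arbitrary ι) 1, single_mem_stdSimplex ℝ _, by
      rw [hzero, zero_smul, hs0]⟩
  · refine ⟨(∑ i, s i)⁻¹ • s, ⟨fun i => ?_, ?_⟩, by rw [smul_inv_smul₀ hzero]⟩
    · exact smul_nonneg (inv_nonneg.2 (sum_nonneg fun i _ => hs i)) (hs i)
    · simp only [Pi.smul_apply, smul_eq_mul, ← mul_sum, inv_mul_cancel₀ hzero]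

theorem sum_rowDeficit (q : ι → ℝ) (hq1 : ∑ i, q i = 1) (p : κ → ℝ) (X : Matrix ι κ ℝ) :
    ∑ i, (q i - ∑ j, X i j * p j) = 1 - transportMass p X := by
  rw [sum_sub_distrib, hq1, transportMass]

theorem sum_columnDeficit_mul {p : κ → ℝ} (hp1 : ∑ j, p j = 1) (X : Matrix ι κ ℝ) :
    ∑ j, columnDeficit X j * p j = 1 - transportMass p X := by
  simp only [columnDeficit, sub_mul, one_mul, sum_sub_distrib, hp1, sum_mul, transportMass]
  rw [sum_comm]

theorem transportCost_add_vecMulVec_le {C : Matrix ι κ ℝ} {M : ℝ} (hCM : ∀ i j, C i j ≤ M)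
    {p : κ → ℝ} (hp : ∀ j, 0 ≤ p j) (X : Matrix ι κ ℝ) {w : ι → ℝ} {r : κ → ℝ}
    (hw : ∀ i, 0 ≤ w i) (hr : ∀ j, 0 ≤ r j) :
    transportCost C p (X + vecMulVec w r) ≤
      transportCost C p X + M * (∑ i, w i) * ∑ j, r j * p j := by
  have hcorr : ∑ i, ∑ j, C i j * (w i * r j) * p j ≤ ∑ i, ∑ j, M * (w i * r j) * p j := by
    gcongr with i _ j _
    · exact hp j
    · exact mul_nonneg (hw i) (hr j)
    · exact hCM i j
  calc transportCost C p (X + vecMulVec w r)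
      = transportCost C p X + ∑ i, ∑ j, C i j * (w i * r j) * p j := by
        simp only [transportCost, Matrix.add_apply, vecMulVec_apply, mul_add, add_mul,
          sum_add_distrib]
    _ ≤ transportCost C p X + ∑ i, ∑ j, M * (w i * r j) * p j := by linarith
    _ = transportCost C p X + M * (∑ i, w i) * ∑ j, r j * p j := by
        rw [mul_assoc, sum_mul_sum, mul_sum]
        congr 1
        refine sum_congr rfl fun i _ => ?_
        rw [mul_sum]
        exact sum_congr rfl fun j _ => by ring

theorem isTransportPlan_add_vecMulVec_columnDeficit {p : κ → ℝ} {q : ι → ℝ}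
    {X : Matrix ι κ ℝ} (hX : ∀ i j, 0 ≤ X i j) (hXt : ∀ j, ∑ i, X i j ≤ 1) {w : ι → ℝ}
    (hw : w ∈ stdSimplex ℝ ι)
    (hrow : ∀ i, w i * ∑ j, columnDeficit X j * p j = q i - ∑ j, X i j * p j) :
    IsTransportPlan p q (X + vecMulVec w (columnDeficit X)) := by
  refine ⟨fun i j => ?_, fun i => ?_, fun j => ?_⟩
  · exact add_nonneg (hX i j) (mul_nonneg (hw.1 i) (sub_nonneg.2 (hXt j)))
  · simp only [Matrix.add_apply, vecMulVec_apply, add_mul, sum_add_distrib, mul_assoc, ← mul_sum,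
      hrow i]
    ring
  · simp only [Matrix.add_apply, vecMulVec_apply, sum_add_distrib, ← sum_mul, hw.2, columnDeficit]
    ring

theorem exists_isTransportPlan_transportCost_le [Nonempty ι] {p : κ → ℝ} {q : ι → ℝ}
    (hp : ∀ j, 0 ≤ p j) (hp1 : ∑ j, p j = 1) (hq1 : ∑ i, q i = 1)
    {C : Matrix ι κ ℝ} {M : ℝ} (hCM : ∀ i j, C i j ≤ M)
    {X : Matrix ι κ ℝ} (hX : ∀ i j, 0 ≤ X i j) (hXp : ∀ i, ∑ j, X i j * p j ≤ q i)
    (hXt : ∀ j, ∑ i, X i j ≤ 1) :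
    ∃ U, IsTransportPlan p q U ∧
      transportCost C p U ≤ transportCost C p X + M * (1 - transportMass p X) := by
  obtain ⟨w, hw, hws⟩ := exists_mem_stdSimplex_sum_smul_eq fun i => sub_nonneg.2 (hXp i)
  have hdeficit : ∑ j, columnDeficit X j * p j = ∑ i, (q i - ∑ j, X i j * p j) := by
    rw [sum_columnDeficit_mul hp1, sum_rowDeficit q hq1]
  refine ⟨X + vecMulVec w (columnDeficit X), ?_, ?_⟩
  · refine isTransportPlan_add_vecMulVec_columnDeficit hX hXt hw fun i => ?_
    rw [hdeficit, mul_comm]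
    exact congrFun hws i
  · have hr : ∀ j, 0 ≤ columnDeficit X j := fun j => sub_nonneg.2 (hXt j)
    simpa only [hw.2, mul_one, sum_columnDeficit_mul hp1] using
      transportCost_add_vecMulVec_le hCM hp X hw.1 hr

theorem fix_packing_transport_general (k ℓ : ℕ) [NeZero k] [NeZero ℓ]
    (p : Fin ℓ → ℝ) (q : Fin k → ℝ) (C : Matrix (Fin k) (Fin ℓ) ℝ)
    (hp : ∀ j, 0 ≤ p j) (hp1 : ∑ j, p j = 1)
    (hq1 : ∑ i, q i = 1)
    (Cmax : ℝ)
    (hCmax : Cmax = Finset.univ.sup' Finset.univ_nonempty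
        (fun i : Fin k => Finset.univ.sup' Finset.univ_nonempty (fun j => C i j)))
    (hCpos : 0 < Cmax)
    (δ ε : ℝ) (hε : ε = δ / (2 * Cmax))
    (OPT : ℝ)
    (X : Matrix (Fin k) (Fin ℓ) ℝ)
    (hXpos : ∀ i j, 0 ≤ X i j)
    (hXp : ∀ i, ∑ j, X i j * p j ≤ q i)
    (hXt : ∀ j, ∑ i, X i j ≤ 1)
    (hmass : 1 - ε ≤ ∑ i, ∑ j, X i j * p j)
    (hXcost : ∑ i, ∑ j, C i j * X i j * p j ≤ OPT + δ / 2) :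
    ∃ U : Matrix (Fin k) (Fin ℓ) ℝ,
      (∀ i j, 0 ≤ U i j) ∧ (∀ i, ∑ j, U i j * p j = q i) ∧
      (∀ j, ∑ i, U i j = 1) ∧
      ∑ i, ∑ j, C i j * U i j * p j ≤ OPT + δ := by
  have hCle : ∀ i j, C i j ≤ Cmax := fun i j => hCmax ▸
    (le_sup' (fun j => C i j) (mem_univ j)).trans
      (le_sup' (fun i => univ.sup' univ_nonempty fun j => C i j) (mem_univ i))
  obtain ⟨U, ⟨hU, hUp, hUt⟩, hUcost⟩ :=
    exists_isTransportPlan_transportCost_le hp hp1 hq1 hCle hXpos hXp hXt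
  have hεC : Cmax * ε = δ / 2 := by
    rw [hε]
    field_simp
  have hdeficit : Cmax * (1 - transportMass p X) ≤ Cmax * ε :=
    mul_le_mul_of_nonneg_left (by rw [transportMass]; linarith) hCpos.le
  refine ⟨U, hU, hUp, hUt, ?_⟩
  simp only [transportCost] at hUcost
  linarith

/-- Given a `(1−ε)`-transportation matrix `X` with cost at most `OPT + δ/2`,
where `ε = δ/(2‖C‖_∞)`, there is an exact transportation matrix `U` with cost
at most `OPT + δ`. -/
theorem fix_packing_transport (k ℓ : ℕ) [NeZero k] [NeZero ℓ]
    (p : Fin ℓ → ℝ) (q : Fin k → ℝ) (C : Matrix (Fin k) (Fin ℓ) ℝ)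
    (hp : ∀ j, 0 ≤ p j) (hp1 : ∑ j, p j = 1)
    (hq : ∀ i, 0 ≤ q i) (hq1 : ∑ i, q i = 1)
    (hC : ∀ i j, 0 ≤ C i j)
    (Cmax : ℝ)
    (hCmax : Cmax = Finset.univ.sup' Finset.univ_nonempty
        (fun i : Fin k => Finset.univ.sup' Finset.univ_nonempty (fun j => C i j)))
    (hCpos : 0 < Cmax)
    (δ ε : ℝ) (hδ : 0 < δ) (hε : ε = δ / (2 * Cmax))
    (OPT : ℝ)
    (hOPT : IsLeast {c : ℝ | ∃ X : Matrix (Fin k) (Fin ℓ) ℝ,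
        (∀ i j, 0 ≤ X i j) ∧ (∀ i, ∑ j, X i j * p j = q i) ∧
        (∀ j, ∑ i, X i j = 1) ∧ c = ∑ i, ∑ j, C i j * X i j * p j} OPT)
    (X : Matrix (Fin k) (Fin ℓ) ℝ)
    (hXpos : ∀ i j, 0 ≤ X i j)
    (hXp : ∀ i, ∑ j, X i j * p j ≤ q i)
    (hXt : ∀ j, ∑ i, X i j ≤ 1)
    (hmass : 1 - ε ≤ ∑ i, ∑ j, X i j * p j)
    (hXcost : ∑ i, ∑ j, C i j * X i j * p j ≤ OPT + δ / 2) :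
    ∃ U : Matrix (Fin k) (Fin ℓ) ℝ,
      (∀ i j, 0 ≤ U i j) ∧ (∀ i, ∑ j, U i j * p j = q i) ∧
      (∀ j, ∑ i, U i j = 1) ∧
      ∑ i, ∑ j, C i j * U i j * p j ≤ OPT + δ :=
  fix_packing_transport_general k ℓ p q C hp hp1 hq1 Cmax hCmax hCpos δ ε hε OPT X hXpos hXp hXt
    hmass hXcost
end
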